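/- arXiv:2510.06217 — 2 statements merged into one kernel-verified Lean document; each statement's English description precedes it below -/
import Mathlib

section
/- For a finite-state, finite-action Markov decision process with policies π and π', initial state distribution ρ, value functions V^π, V^{π'}, and advantage function A^π(s,a) = Q^π(s,a) − V^π(s), the performance difference satisfies E_{s∼ρ}[V^{π'}(s) − V^π(s)] = E_{s∼d_ρ^{π'}} E_{a∼π'(·|s)}[A^π(s,a)], where d_ρ^{π'} is the (discounted) state visitation distribution of π' started from ρ. -/
/-- Performance Difference Lemma (Kakade–Langford): for a finite discounted MDP,
`E_{s∼ρ}[V^{π'}(s) − V^π(s)] = (1/(1−γ)) E_{s∼d_ρ^{π'}} E_{a∼π'(·|s)}[A^π(s,a)]`,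
where `d` is the normalized discounted state visitation distribution of `π'` from `ρ`,
and the value/visitation functions are characterized by their Bellman/fixed-point equations. -/
theorem performance_difference_lemma
    {S A : Type*} [Fintype S] [Fintype A]
    (γ : ℝ) (hγ0 : 0 ≤ γ) (hγ1 : γ < 1)
    (P : S → A → S → ℝ) (R : S → A → ℝ)
    (π π' : S → A → ℝ) (ρ : S → ℝ)
    (Vπ Vπ' : S → ℝ) (Qπ : S → A → ℝ) (d : S → ℝ)
    (hP : ∀ s a, (∀ s', 0 ≤ P s a s') ∧ ∑ s', P s a s' = 1)
    (hπ : ∀ s, (∀ a, 0 ≤ π s a) ∧ ∑ a, π s a = 1)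
    (hπ' : ∀ s, (∀ a, 0 ≤ π' s a) ∧ ∑ a, π' s a = 1)
    (hρ : (∀ s, 0 ≤ ρ s) ∧ ∑ s, ρ s = 1)
    (hQπ : ∀ s a, Qπ s a = R s a + γ * ∑ s', P s a s' * Vπ s')
    (hVπ : ∀ s, Vπ s = ∑ a, π s a * Qπ s a)
    (hVπ' : ∀ s, Vπ' s = ∑ a, π' s a * (R s a + γ * ∑ s', P s a s' * Vπ' s'))
    (hd : ∀ s, d s = (1 - γ) * ρ s + γ * ∑ s', ∑ a, d s' * π' s' a * P s' a s) :
    ∑ s, ρ s * (Vπ' s - Vπ s)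
      = (1 / (1 - γ)) * ∑ s, d s * ∑ a, π' s a * (Qπ s a - Vπ s) := by
  have hγ : (1 : ℝ) - γ ≠ 0 := by linarith
  set f : S → ℝ := fun s => Vπ' s - Vπ s with hf
  set B : S → ℝ := fun s => ∑ a, π' s a * (Qπ s a - Vπ s) with hB
  have key1 : ∀ s, f s = B s + γ * ∑ a, π' s a * ∑ s', P s a s' * f s' := by
    intro s
    have h2 : B s + γ * ∑ a, π' s a * ∑ s', P s a s' * f s'
        = ∑ a, (π' s a * (Qπ s a - Vπ s)
            + π' s a * (γ * ∑ s', P s a s' * f s')) := by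
      rw [Finset.sum_add_distrib, hB, Finset.mul_sum]
      congr 1
      exact Finset.sum_congr rfl fun a _ => by ring
    rw [h2]
    have h3 : ∀ a, π' s a * (Qπ s a - Vπ s) + π' s a * (γ * ∑ s', P s a s' * f s')
        = π' s a * (R s a + γ * ∑ s', P s a s' * Vπ' s') - π' s a * Vπ s := by
      intro a
      have hsplit : ∑ s', P s a s' * f s'
          = (∑ s', P s a s' * Vπ' s') - ∑ s', P s a s' * Vπ s' := by
        rw [← Finset.sum_sub_distrib]
        exact Finset.sum_congr rfl fun s' _ => by simp [hf]; ring
      rw [hsplit, hQπ s a]; ring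
    rw [Finset.sum_congr rfl fun a _ => h3 a, Finset.sum_sub_distrib,
      ← Finset.sum_mul, (hπ' s).2, one_mul, ← hVπ' s]
  have key2 : ∑ s, d s * f s
      = (1 - γ) * ∑ s, ρ s * f s
        + γ * ∑ s, d s * ∑ a, π' s a * ∑ s', P s a s' * f s' := by
    calc ∑ s, d s * f s
        = ∑ s, ((1 - γ) * (ρ s * f s)
            + γ * ∑ s', ∑ a, d s' * π' s' a * P s' a s * f s) := by
          refine Finset.sum_congr rfl fun s _ => ?_
          rw [hd s]
          simp only [add_mul, Finset.sum_mul, mul_assoc]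
      _ = (1 - γ) * ∑ s, ρ s * f s
            + γ * ∑ s, ∑ s', ∑ a, d s' * π' s' a * P s' a s * f s := by
          rw [Finset.sum_add_distrib, ← Finset.mul_sum, ← Finset.mul_sum]
      _ = (1 - γ) * ∑ s, ρ s * f s
            + γ * ∑ s, d s * ∑ a, π' s a * ∑ s', P s a s' * f s' := by
          congr 1
          rw [Finset.sum_comm]
          refine congrArg _ (Finset.sum_congr rfl fun s' _ => ?_)
          rw [Finset.sum_comm, Finset.mul_sum]
          refine Finset.sum_congr rfl fun a _ => ?_
          rw [Finset.mul_sum, Finset.mul_sum]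
          exact Finset.sum_congr rfl fun t _ => by ring
  have key3 : ∑ s, d s * f s
      = ∑ s, d s * B s
        + γ * ∑ s, d s * ∑ a, π' s a * ∑ s', P s a s' * f s' := by
    calc ∑ s, d s * f s
        = ∑ s, (d s * B s + γ * (d s * ∑ a, π' s a * ∑ s', P s a s' * f s')) := by
          refine Finset.sum_congr rfl fun s _ => ?_
          rw [key1 s]; ring
      _ = _ := by rw [Finset.sum_add_distrib, ← Finset.mul_sum]
  have key4 : (1 - γ) * ∑ s, ρ s * f s = ∑ s, d s * B s := by linarith
  have hgoal : ∑ s, ρ s * f s = (1 / (1 - γ)) * ∑ s, d s * B s := by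
    field_simp
    linarith
  exact hgoal
end

section
/- Let π and π' be probability distributions on a finite set A with π' absolutely continuous with respect to π, and let r, A: A → ℝ with E_π[A] = 0 and π'(a) ∝ π(a)·exp(γ(A(a) + r(a))) for γ > 0. Then E_{π'}[A] ≥ (1/γ)·KL(π'‖π) + E_π[r] − E_{π'}[r] ≥ E_π[r] − E_{π'}[r]. -/
/-- Non-linearized key step of the policy improvement theorem: with `E_π[A] = 0`
and `π'(a) ∝ π(a)·exp(γ(A(a)+r(a)))`,
`E_{π'}[A] ≥ (1/γ)·KL(π'‖π) + E_π[r] − E_{π'}[r] ≥ E_π[r] − E_{π'}[r]`. -/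
theorem tilted_advantage_kl_lower_bound
    {A : Type*} [Fintype A]
    (π : A → ℝ) (hπ0 : ∀ a, 0 ≤ π a) (hπ1 : ∑ a, π a = 1)
    (r Adv : A → ℝ) (hA : ∑ a, π a * Adv a = 0)
    (γ : ℝ) (hγ : 0 < γ)
    (π' : A → ℝ)
    (hπ' : ∀ a, π' a = π a * Real.exp (γ * (Adv a + r a)) /
      (∑ b, π b * Real.exp (γ * (Adv b + r b))))
    (habs : ∀ a, 0 < π' a → 0 < π a) :
    (∑ a, π' a * Adv a ≥
      (1 / γ) * (∑ a, π' a * Real.log (π' a / π a)) +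
        (∑ a, π a * r a) - ∑ a, π' a * r a) ∧
    ((1 / γ) * (∑ a, π' a * Real.log (π' a / π a)) +
        (∑ a, π a * r a) - ∑ a, π' a * r a ≥
      (∑ a, π a * r a) - ∑ a, π' a * r a) := by
  classical
  set Z : ℝ := ∑ b, π b * Real.exp (γ * (Adv b + r b)) with hZ
  -- Z > 0
  have hZpos : 0 < Z := by
    obtain ⟨a, ha⟩ : ∃ a, 0 < π a := by
      by_contra h
      push_neg at h
      have : ∀ a, π a = 0 := fun a => le_antisymm (h a) (hπ0 a)
      simp [this] at hπ1
    refine Finset.sum_pos' (fun b _ => mul_nonneg (hπ0 b) (Real.exp_pos _).le) ?_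
    exact ⟨a, Finset.mem_univ a, mul_pos ha (Real.exp_pos _)⟩
  have hπ'0 : ∀ a, 0 ≤ π' a := fun a => by
    rw [hπ' a]
    exact div_nonneg (mul_nonneg (hπ0 a) (Real.exp_pos _).le) hZpos.le
  -- ∑ π' = 1
  have hsum' : ∑ a, π' a = 1 := by
    simp only [hπ']
    rw [← Finset.sum_div, ← hZ, div_self hZpos.ne']
  -- Jensen: γ * E_π[r] ≤ log Z
  have hJ : γ * (∑ a, π a * r a) ≤ Real.log Z := by
    have hconv := convexOn_exp.map_sum_le (t := Finset.univ) (w := π)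
      (p := fun a => γ * (Adv a + r a)) (fun i _ => hπ0 i) hπ1 (fun i _ => trivial)
    have hsum : ∑ a, π a • (γ * (Adv a + r a)) = γ * (∑ a, π a * r a) := by
      simp only [smul_eq_mul]
      have : ∀ a, π a * (γ * (Adv a + r a)) = γ * (π a * Adv a) + γ * (π a * r a) := by
        intro a; ring
      rw [Finset.sum_congr rfl (fun a _ => this a), Finset.sum_add_distrib,
        ← Finset.mul_sum, ← Finset.mul_sum, hA, mul_zero, zero_add]
    have h1 : Real.exp (γ * (∑ a, π a * r a)) ≤ Z := by
      calc Real.exp (γ * (∑ a, π a * r a))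
          = Real.exp (∑ a, π a • (γ * (Adv a + r a))) := by rw [hsum]
        _ ≤ ∑ a, π a • Real.exp (γ * (Adv a + r a)) := hconv
        _ = Z := by simp [hZ, smul_eq_mul]
    calc γ * (∑ a, π a * r a)
        = Real.log (Real.exp (γ * (∑ a, π a * r a))) := (Real.log_exp _).symm
      _ ≤ Real.log Z := Real.log_le_log (Real.exp_pos _) h1
  -- KL identity
  have hKL : ∑ a, π' a * Real.log (π' a / π a)
      = γ * ((∑ a, π' a * Adv a) + (∑ a, π' a * r a)) - Real.log Z := by
    have key : ∀ a, π' a * Real.log (π' a / π a)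
        = π' a * (γ * (Adv a + r a)) - π' a * Real.log Z := by
      intro a
      rcases eq_or_lt_of_le (hπ'0 a) with h0 | hpos
      · rw [← h0]; ring
      · have hπa : 0 < π a := habs a hpos
        have hratio : π' a / π a = Real.exp (γ * (Adv a + r a)) / Z := by
          rw [hπ' a]
          field_simp
        rw [hratio, Real.log_div (Real.exp_ne_zero _) hZpos.ne', Real.log_exp]
        ring
    rw [Finset.sum_congr rfl (fun a _ => key a), Finset.sum_sub_distrib,
      ← Finset.sum_mul, hsum', one_mul]
    have : ∀ a, π' a * (γ * (Adv a + r a))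
        = γ * (π' a * Adv a) + γ * (π' a * r a) := by intro a; ring
    rw [Finset.sum_congr rfl (fun a _ => this a), Finset.sum_add_distrib,
      ← Finset.mul_sum, ← Finset.mul_sum, ← mul_add]
  -- Gibbs: KL ≥ 0
  have hKLnn : 0 ≤ ∑ a, π' a * Real.log (π' a / π a) := by
    have key : ∀ a, π' a - π a ≤ π' a * Real.log (π' a / π a) := by
      intro a
      rcases eq_or_lt_of_le (hπ'0 a) with h0 | hpos
      · rw [← h0]; simpa using hπ0 a
      · have hπa : 0 < π a := habs a hpos
        have hlog : Real.log (π a / π' a) ≤ π a / π' a - 1 :=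
          Real.log_le_sub_one_of_pos (div_pos hπa hpos)
        have : 1 - π a / π' a ≤ Real.log (π' a / π a) := by
          rw [Real.log_div hπa.ne' hpos.ne'] at hlog
          rw [Real.log_div hpos.ne' hπa.ne']
          linarith
        have h2 := mul_le_mul_of_nonneg_left this hpos.le
        calc π' a - π a = π' a * (1 - π a / π' a) := by field_simp
          _ ≤ π' a * Real.log (π' a / π a) := h2
    calc (0:ℝ) = (∑ a, π' a) - ∑ a, π a := by rw [hsum', hπ1]; ring
      _ = ∑ a, (π' a - π a) := by rw [Finset.sum_sub_distrib]
      _ ≤ _ := Finset.sum_le_sum (fun a _ => key a)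
  constructor
  · rw [hKL]
    have hineq : (∑ a, π a * r a) ≤ (1 / γ) * Real.log Z := by
      rw [one_div, inv_mul_eq_div, le_div_iff₀ hγ]
      nlinarith [hJ]
    have : (1 / γ) * (γ * ((∑ a, π' a * Adv a) + (∑ a, π' a * r a)) - Real.log Z)
        = (∑ a, π' a * Adv a) + (∑ a, π' a * r a) - (1 / γ) * Real.log Z := by
      field_simp
    rw [this]
    linarith
  · have : 0 ≤ (1 / γ) * (∑ a, π' a * Real.log (π' a / π a)) :=
      mul_nonneg (by positivity) hKLnn
    linarith
end
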